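/- arXiv:1708.02323 — 2 statements merged into one kernel-verified Lean document; each statement's English description precedes it below -/
import Mathlib

section
/- Let (G, V^∞, T, k) be an instance of OddMultiwayNodeCut where G is a directed acyclic graph and T ⊆ V^∞ ⊆ V(G). Let M* be an odd multiway cut of minimum size that, among all minimum-size odd multiway cuts S, maximizes |r_G(S) ∪ f_G(S) ∪ S|, and among those, maximizes |r_G(S)|. Then M* is thin, and for every node v ∈ r_G(M*) there is an important v→T separator contained in M*. -/
/-- A (simple) directed path in the directed graph `G`, represented as a nonempty
list of pairwise distinct vertices in which every consecutive pair is an edge of `G`. -/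
def IsPath {V : Type*} (G : V → V → Prop) (p : List V) : Prop :=
  p ≠ [] ∧ p.Chain' G ∧ p.Nodup

/-- `p` is a directed path from `u` to `v` in `G`. -/
def IsPathFrom {V : Type*} (G : V → V → Prop) (u v : V) (p : List V) : Prop :=
  IsPath G p ∧ p.head? = some u ∧ p.getLast? = some v

/-- The length (number of edges) of a path, given as its list of vertices. -/
def pathLen {V : Type*} (p : List V) : ℕ := p.length - 1

/-- The list of directed edges traversed by a path. -/
def edgesOf {V : Type*} (p : List V) : List (V × V) := p.zip p.tail

/-- A directed graph is acyclic (a DAG) if no vertex lies on a directed cycle. -/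
def Acyclic {V : Type*} (G : V → V → Prop) : Prop :=
  ∀ v, ¬ Relation.TransGen G v v

/-- The graph obtained from `G` by deleting the vertex set `M`. -/
def delV {V : Type*} (G : V → V → Prop) (M : Set V) : V → V → Prop :=
  fun a b => G a b ∧ a ∉ M ∧ b ∉ M

/-- An odd multiway (node) cut for the instance `(G, Vinf, T)`: a set of
non-protected vertices meeting every odd `T`-path of `G`. -/
def OddMWC {V : Type*} (G : V → V → Prop) (Vinf T M : Set V) : Prop :=
  M ⊆ Vinfᶜ ∧
  ∀ u ∈ T, ∀ v ∈ T, ∀ p, IsPathFrom G u v p → Odd (pathLen p) → ∃ z ∈ p, z ∈ M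

/-- The forward shadow of `M`: vertices `v ∉ M` such that every path from a
terminal to `v` in `G` intersects `M`. -/
def fShadow {V : Type*} (G : V → V → Prop) (T M : Set V) : Set V :=
  {v | v ∉ M ∧ ∀ t ∈ T, ∀ p, IsPathFrom G t v p → ∃ z ∈ p, z ∈ M}

/-- The reverse shadow of `M`: vertices `v ∉ M` such that every path from `v`
to a terminal in `G` intersects `M`. -/
def rShadow {V : Type*} (G : V → V → Prop) (T M : Set V) : Set V :=
  {v | v ∉ M ∧ ∀ t ∈ T, ∀ p, IsPathFrom G v t p → ∃ z ∈ p, z ∈ M}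

/-- `S` is an `X → Y` separator: a set of non-protected vertices whose deletion
destroys all paths from `X` to `Y`. -/
def IsSep {V : Type*} (G : V → V → Prop) (Vinf X Y S : Set V) : Prop :=
  Disjoint S Vinf ∧ ∀ x ∈ X, ∀ y ∈ Y, ¬ ∃ p, IsPathFrom (delV G S) x y p

/-- The set of vertices reachable from `X` in `G`. -/
def Reach {V : Type*} (G : V → V → Prop) (X : Set V) : Set V :=
  {v | ∃ x ∈ X, ∃ p, IsPathFrom G x v p}

/-- The `X → Y` separator `S'` dominates the `X → Y` separator `S`. -/
def Dominates {V : Type*} (G : V → V → Prop) (Vinf X Y S' S : Set V) : Prop :=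
  IsSep G Vinf X Y S' ∧ S'.ncard ≤ S.ncard ∧
    Reach (delV G S) X ⊂ Reach (delV G S') X

/-- An important `X → Y` separator: a minimal `X → Y` separator that is not
dominated by any other `X → Y` separator. -/
def ImportantSep {V : Type*} (G : V → V → Prop) (Vinf X Y S : Set V) : Prop :=
  IsSep G Vinf X Y S ∧ (∀ S', S' ⊂ S → ¬ IsSep G Vinf X Y S') ∧
  ∀ S', IsSep G Vinf X Y S' → S' ≠ S → ¬ Dominates G Vinf X Y S' S

/-!
If `x ∈ M` lay in the reverse shadow of `M \ {x}`, every odd `T`-path through `x` would meet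
`M \ {x}` after `x`, so `M \ {x}` would be a smaller odd multiway cut.

For `x ∈ r(M)`, `M` separates `x` from `T`; take an inclusion-minimal `x → T` separator `S ⊆ M`.
Suppose `S'` dominates `S`. Minimality of `S` lets `x` reach all of `S \ S'` in `G - S'`, so these
vertices fall into the reverse shadow of `M' = (M \ S) ∪ S'`. Then `M'` is again a minimum odd
multiway cut whose shadow hull contains that of `M`; shadow maximality forces the hulls to agree
and `|r(M')| ≤ |r(M)|`, and counting gives `S' \ S ⊆ r(M)`. Finally, by thinness some
`s ∈ S \ S'` reaches `T` avoiding `M \ {s}`; such a walk cannot be blocked by `S' \ M ⊆ r(M)`,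
so `x` reaches `T` in `G - S'`, a contradiction.
-/

open Relation Set

section Paths

variable {V : Type*} {R : V → V → Prop} {a b z : V} {p : List V}

lemma IsPathFrom.singleton (R : V → V → Prop) (a : V) : IsPathFrom R a a [a] :=
  ⟨⟨List.cons_ne_nil _ _, List.isChain_singleton _, List.nodup_singleton _⟩, rfl, rfl⟩

lemma IsPathFrom.suffix (hp : IsPathFrom R a b p) (hz : z ∈ p) :
    ∃ q, IsPathFrom R z b q ∧ q ⊆ p := by
  obtain ⟨p₁, p₂, rfl⟩ := List.append_of_mem hz
  obtain ⟨⟨-, hchain, hnodup⟩, -, hlast⟩ := hp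
  have hsuffix : z :: p₂ <:+ p₁ ++ z :: p₂ := List.suffix_append _ _
  refine ⟨z :: p₂, ⟨⟨List.cons_ne_nil _ _, List.IsChain.suffix hchain hsuffix,
    hnodup.sublist hsuffix.sublist⟩, rfl, ?_⟩, hsuffix.subset⟩
  rwa [List.getLast?_append_cons] at hlast

lemma IsPathFrom.reflTransGen (hp : IsPathFrom R a b p) : ReflTransGen R a b := by
  obtain ⟨⟨hne, hchain, -⟩, hhead, hlast⟩ := hp
  rw [List.head?_eq_some_head hne, Option.some_inj] at hhead
  rw [List.getLast?_eq_some_getLast hne, Option.some_inj] at hlast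
  exact hhead ▸ hlast ▸ List.relationReflTransGen_of_exists_isChain p hchain hne

/-- Shortcutting a walk at a repeated vertex turns it into a path. -/
lemma exists_isPathFrom_of_reflTransGen (h : ReflTransGen R a b) : ∃ p, IsPathFrom R a b p := by
  induction h using ReflTransGen.head_induction_on with
  | refl => exact ⟨[b], .singleton R b⟩
  | @head a c hac _ ih =>
    obtain ⟨p, hp⟩ := ih
    by_cases ha : a ∈ p
    · obtain ⟨q, hq, -⟩ := hp.suffix ha
      exact ⟨q, hq⟩
    · obtain ⟨⟨-, hchain, hnodup⟩, hhead, hlast⟩ := hp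
      obtain ⟨l, rfl⟩ := List.head?_eq_some_iff.1 hhead
      exact ⟨a :: c :: l, ⟨⟨List.cons_ne_nil _ _, hchain.cons_cons hac,
        List.nodup_cons.2 ⟨ha, hnodup⟩⟩, rfl, by rwa [List.getLast?_cons_cons]⟩⟩

lemma exists_isPathFrom_iff : (∃ p, IsPathFrom R a b p) ↔ ReflTransGen R a b :=
  ⟨fun ⟨_, hp⟩ => hp.reflTransGen, exists_isPathFrom_of_reflTransGen⟩

end Paths

section DeleteVertices

variable {V : Type*} {G : V → V → Prop} {W W' : Set V} {a b s : V} {p : List V}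

lemma reflTransGen_delV_mono (hW : W ⊆ W') (h : ReflTransGen (delV G W') a b) :
    ReflTransGen (delV G W) a b :=
  ReflTransGen.mono (fun _ _ e => ⟨e.1, fun h => e.2.1 (hW h), fun h => e.2.2 (hW h)⟩) _ _ h

lemma notMem_of_reflTransGen_delV (h : ReflTransGen (delV G W) a b) (ha : a ∉ W) : b ∉ W := by
  induction h with
  | refl => exact ha
  | tail _ e _ => exact e.2.2

lemma notMem_of_reflTransGen_delV' (h : ReflTransGen (delV G W) a b) (hb : b ∉ W) : a ∉ W := by
  rcases h.cases_head with rfl | ⟨_, e, _⟩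
  exacts [hb, e.2.1]

lemma eq_of_reflTransGen_delV (h : ReflTransGen (delV G W) a b) (ha : a ∈ W) : b = a := by
  rcases h.cases_head with rfl | ⟨_, e, _⟩
  exacts [rfl, absurd ha e.2.1]

lemma IsPathFrom.reflTransGen_delV (hp : IsPathFrom G a b p) (hW : ∀ z ∈ p, z ∉ W) :
    ReflTransGen (delV G W) a b := by
  obtain ⟨⟨hne, hchain, hnodup⟩, hhead, hlast⟩ := hp
  refine IsPathFrom.reflTransGen ⟨⟨hne, ?_, hnodup⟩, hhead, hlast⟩
  exact (List.IsChain.iff_mem.1 hchain).imp fun x y h => ⟨h.2.2, hW x h.1, hW y h.2.1⟩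

lemma exists_isPathFrom_avoiding_iff (ha : a ∉ W) :
    (∃ p, IsPathFrom G a b p ∧ ∀ z ∈ p, z ∉ W) ↔ ReflTransGen (delV G W) a b := by
  refine ⟨fun ⟨_, hp, hW⟩ => hp.reflTransGen_delV hW, fun h => ?_⟩
  obtain ⟨p, ⟨hne, hchain, hnodup⟩, hhead, hlast⟩ := exists_isPathFrom_of_reflTransGen h
  refine ⟨p, ⟨⟨hne, hchain.imp fun _ _ e => e.1, hnodup⟩, hhead, hlast⟩, ?_⟩
  refine List.IsChain.induction _ p hchain (fun _ _ e _ => e.2.2) fun hne' => ?_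
  rw [List.head?_eq_some_head hne', Option.some_inj] at hhead
  rwa [hhead]

lemma exists_mem_sdiff_reflTransGen_delV (h : ReflTransGen (delV G W') a b)
    (hW : ¬ ReflTransGen (delV G W) a b) : ∃ z ∈ W \ W', ReflTransGen (delV G W') z b := by
  induction h with
  | refl => exact absurd .refl hW
  | @tail c b hac e ih =>
    by_cases hb : b ∈ W
    · exact ⟨b, ⟨hb, e.2.2⟩, .refl⟩
    by_cases hac' : ReflTransGen (delV G W) a c
    · by_cases hc : c ∈ W
      · exact ⟨c, ⟨hc, e.2.1⟩, .single e⟩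
      · exact absurd (hac'.tail ⟨e.1, hc, hb⟩) hW
    · obtain ⟨z, hz, hzc⟩ := ih hac'
      exact ⟨z, hz, hzc.tail e⟩

lemma exists_reflTransGen_delV_adj_of_sdiff_singleton
    (h : ReflTransGen (delV G (W \ {s})) a b) (hW : ¬ ReflTransGen (delV G W) a b) (ha : a ∉ W) :
    ∃ u, ReflTransGen (delV G W) a u ∧ G u s := by
  induction h with
  | refl => exact absurd .refl hW
  | @tail c b _ e ih =>
    by_cases hac : ReflTransGen (delV G W) a c
    · by_cases hbs : b = s
      · exact ⟨c, hac, hbs ▸ e.1⟩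
      · have hb : b ∉ W := fun hb => e.2.2 ⟨hb, hbs⟩
        exact absurd (hac.tail ⟨e.1, notMem_of_reflTransGen_delV hac ha, hb⟩) hW
    · exact ih hac

lemma reflTransGen_delV_of_sdiff_singleton (h : ReflTransGen (delV G (W \ {s})) s b) :
    s = b ∨ ∃ y ∉ W, G s y ∧ ReflTransGen (delV G W) y b := by
  induction h with
  | refl => exact .inl rfl
  | @tail c b _ e ih =>
    by_cases hbs : b = s
    · exact .inl hbs.symm
    have hb : b ∉ W := fun hb => e.2.2 ⟨hb, hbs⟩
    rcases ih with rfl | ⟨y, hy, hsy, hyc⟩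
    · exact .inr ⟨b, hb, e.1, .refl⟩
    · exact .inr ⟨y, hy, hsy, hyc.tail ⟨e.1, notMem_of_reflTransGen_delV hyc hy, hb⟩⟩

end DeleteVertices

section Shadows

variable {V : Type*} {G : V → V → Prop} {Vinf T M M' : Set V} {v x : V}

lemma mem_rShadow_iff :
    v ∈ rShadow G T M ↔ v ∉ M ∧ ∀ t ∈ T, ¬ ReflTransGen (delV G M) v t := by
  refine and_congr_right fun hv => forall₂_congr fun t _ => ?_
  rw [← exists_isPathFrom_avoiding_iff hv]
  push Not
  rfl

lemma mem_fShadow_iff :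
    v ∈ fShadow G T M ↔ v ∉ M ∧ ∀ t ∈ T, ¬ ReflTransGen (delV G M) t v := by
  refine and_congr_right fun hv => forall₂_congr fun t _ => ⟨fun h htv => ?_, fun h p hp => ?_⟩
  · obtain ⟨p, hp, hpM⟩ :=
      (exists_isPathFrom_avoiding_iff (notMem_of_reflTransGen_delV' htv hv)).2 htv
    obtain ⟨z, hz, hzM⟩ := h p hp
    exact hpM z hz hzM
  · by_contra! hpM
    exact h (hp.reflTransGen_delV hpM)

lemma OddMWC.of_sdiff_subset_rShadow (hM : OddMWC G Vinf T M) (hM' : M' ⊆ Vinfᶜ)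
    (h : M \ M' ⊆ rShadow G T M') : OddMWC G Vinf T M' := by
  refine ⟨hM', fun u hu v hv p hp hodd => ?_⟩
  obtain ⟨z, hz, hzM⟩ := hM.2 u hu v hv p hp hodd
  by_cases hzM' : z ∈ M'
  · exact ⟨z, hz, hzM'⟩
  obtain ⟨q, hq, hqp⟩ := hp.suffix hz
  obtain ⟨w, hw, hwM'⟩ := (h ⟨hzM, hzM'⟩).2 v hv q hq
  exact ⟨w, hqp hw, hwM'⟩

lemma OddMWC.notMem_rShadow_sdiff_singleton [Finite V] (hM : OddMWC G Vinf T M)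
    (hmin : ∀ S, OddMWC G Vinf T S → M.ncard ≤ S.ncard) (hx : x ∈ M) :
    x ∉ rShadow G T (M \ {x}) := by
  intro hxr
  have hcut : OddMWC G Vinf T (M \ {x}) := by
    refine hM.of_sdiff_subset_rShadow (sdiff_subset.trans hM.1) ?_
    rwa [sdiff_sdiff_cancel_left (singleton_subset_iff.2 hx), singleton_subset_iff]
  exact (hmin _ hcut).not_gt (ncard_sdiff_singleton_lt_of_mem hx)

lemma rShadow_sdiff_subset (h : M \ M' ⊆ rShadow G T M') :
    rShadow G T M \ M' ⊆ rShadow G T M' := by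
  rintro v ⟨hv, hvM'⟩
  refine mem_rShadow_iff.2 ⟨hvM', fun t ht hvt => ?_⟩
  obtain ⟨z, hz, hzt⟩ := exists_mem_sdiff_reflTransGen_delV hvt ((mem_rShadow_iff.1 hv).2 t ht)
  exact (mem_rShadow_iff.1 (h hz)).2 t ht hzt

lemma fShadow_sdiff_subset (h : M \ M' ⊆ rShadow G T M') :
    fShadow G T M \ M' ⊆ fShadow G T M' ∪ rShadow G T M' := by
  rintro v ⟨hv, hvM'⟩
  by_cases hf : v ∈ fShadow G T M'
  · exact .inl hf
  obtain ⟨t, ht, htv⟩ : ∃ t ∈ T, ReflTransGen (delV G M') t v := by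
    simpa [mem_fShadow_iff, hvM'] using hf
  obtain ⟨z, hz, hzv⟩ := exists_mem_sdiff_reflTransGen_delV htv ((mem_fShadow_iff.1 hv).2 t ht)
  refine .inr (mem_rShadow_iff.2 ⟨hvM', fun t' ht' hvt' => ?_⟩)
  exact (mem_rShadow_iff.1 (h hz)).2 t' ht' (hzv.trans hvt')

end Shadows

section Separators

variable {V : Type*} {G : V → V → Prop} {Vinf Y S S' : Set V} {s v x : V}

lemma isSep_singleton_iff :
    IsSep G Vinf {x} Y S ↔ Disjoint S Vinf ∧ ∀ y ∈ Y, ¬ ReflTransGen (delV G S) x y := by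
  simp [IsSep, exists_isPathFrom_iff]

lemma mem_reach_singleton_iff : v ∈ Reach G {x} ↔ ReflTransGen G x v := by
  simp [Reach, exists_isPathFrom_iff]

/-- By minimality of `S`, `x` reaches `Y` in `G - (S \ {s})`; the vertex before the first visit
of `s` is reachable in `G - S`, hence in `G - S'`. -/
lemma reflTransGen_delV_of_reach_subset (hS : IsSep G Vinf {x} Y S)
    (hSmin : ∀ S'' ⊂ S, ¬ IsSep G Vinf {x} Y S'') (hxS : x ∉ S) (hxS' : x ∉ S')
    (hreach : Reach (delV G S) {x} ⊆ Reach (delV G S') {x}) (hs : s ∈ S \ S') :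
    ReflTransGen (delV G S') x s := by
  obtain ⟨y, hy, hxy⟩ : ∃ y ∈ Y, ReflTransGen (delV G (S \ {s})) x y := by
    by_contra! h
    exact hSmin _ (sdiff_singleton_ssubset.2 hs.1)
      (isSep_singleton_iff.2 ⟨hS.1.mono_left sdiff_subset, h⟩)
  obtain ⟨u, hxu, hus⟩ :=
    exists_reflTransGen_delV_adj_of_sdiff_singleton hxy ((isSep_singleton_iff.1 hS).2 y hy) hxS
  have hxu' : ReflTransGen (delV G S') x u :=
    mem_reach_singleton_iff.1 (hreach (mem_reach_singleton_iff.2 hxu))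
  exact hxu'.tail ⟨hus, notMem_of_reflTransGen_delV hxu' hxS', hs.2⟩

end Separators

lemma Set.sdiff_subset_of_ncard_le {α : Type*} [Finite α] {A S S' : Set α} (hAS : Disjoint A S)
    (hcard : S'.ncard ≤ S.ncard) (h : (A \ S').ncard + (S \ S').ncard ≤ A.ncard) :
    S' \ S ⊆ A := by
  have hsub : A ∩ S' ⊆ S' \ S := fun v hv => ⟨hv.2, disjoint_left.1 hAS hv.1⟩
  have hA := ncard_inter_add_ncard_sdiff_eq_ncard A S'
  have hS := ncard_inter_add_ncard_sdiff_eq_ncard S S'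
  have hS' := ncard_inter_add_ncard_sdiff_eq_ncard S' S
  rw [inter_comm] at hS'
  rw [← eq_of_subset_of_ncard_le hsub (by omega)]
  exact inter_subset_left

section ShadowMaximal

variable {V : Type*} {G : V → V → Prop} {Vinf T M S S' : Set V} {s x : V}

def shadowHull (G : V → V → Prop) (T M : Set V) : Set V :=
  rShadow G T M ∪ fShadow G T M ∪ M

lemma shadowHull_subset (h : M \ S ⊆ rShadow G T S) : shadowHull G T M ⊆ shadowHull G T S := by
  intro v hv
  by_cases hvS : v ∈ S
  · exact .inr hvS
  rcases hv with (hv | hv) | hv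
  · exact .inl (.inl (rShadow_sdiff_subset h ⟨hv, hvS⟩))
  · rcases fShadow_sdiff_subset h ⟨hv, hvS⟩ with hf | hr
    exacts [.inl (.inr hf), .inl (.inl hr)]
  · exact .inl (.inl (h ⟨hv, hvS⟩))

structure IsShadowMaximal (G : V → V → Prop) (Vinf T M : Set V) : Prop where
  oddMWC : OddMWC G Vinf T M
  ncard_le : ∀ S, OddMWC G Vinf T S → M.ncard ≤ S.ncard
  shadowHull_ncard_le : ∀ S, OddMWC G Vinf T S → S.ncard = M.ncard →
    (shadowHull G T S).ncard ≤ (shadowHull G T M).ncard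
  rShadow_ncard_le : ∀ S, OddMWC G Vinf T S → S.ncard = M.ncard →
    (shadowHull G T S).ncard = (shadowHull G T M).ncard →
    (rShadow G T S).ncard ≤ (rShadow G T M).ncard

lemma IsShadowMaximal.sdiff_subset_rShadow_of_exchange [Finite V]
    (hM : IsShadowMaximal G Vinf T M) (hSM : S ⊆ M) (hS' : S' ⊆ Vinfᶜ)
    (hcard : S'.ncard ≤ S.ncard) (hexchange : S \ S' ⊆ rShadow G T (M \ S ∪ S')) :
    S' \ S ⊆ rShadow G T M := by
  set M' := M \ S ∪ S'
  have hdiff : M \ M' ⊆ rShadow G T M' := fun v hv =>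
    hexchange ⟨by_contra fun h => hv.2 (.inl ⟨hv.1, h⟩), fun h => hv.2 (.inr h)⟩
  have hcut := hM.oddMWC.of_sdiff_subset_rShadow
    (union_subset (sdiff_subset.trans hM.oddMWC.1) hS') hdiff
  have hM'card : M'.ncard = M.ncard := by
    refine le_antisymm ?_ (hM.ncard_le M' hcut)
    have : M'.ncard ≤ (M \ S).ncard + S'.ncard := ncard_union_le _ _
    have := ncard_sdiff hSM
    have := ncard_le_ncard hSM
    omega
  have hhull := eq_of_subset_of_ncard_le (shadowHull_subset hdiff)
    (hM.shadowHull_ncard_le M' hcut hM'card)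
  have hrM : Disjoint (rShadow G T M) S := disjoint_left.2 fun v hv hvS => hv.1 (hSM hvS)
  refine sdiff_subset_of_ncard_le hrM hcard ?_
  calc (rShadow G T M \ S').ncard + (S \ S').ncard = (rShadow G T M \ S' ∪ S \ S').ncard :=
        (ncard_union_eq (hrM.mono sdiff_subset sdiff_subset)).symm
    _ ≤ (rShadow G T M').ncard := by
        refine ncard_le_ncard (union_subset (fun v hv => ?_) hexchange)
        exact rShadow_sdiff_subset hdiff ⟨hv.1, fun h => h.elim (fun h => hv.1.1 h.1) hv.2⟩
    _ ≤ (rShadow G T M).ncard := hM.rShadow_ncard_le M' hcut hM'card (congrArg ncard hhull).symm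

/-- After its last visit to `s`, a walk from `s` to `T` avoiding `M \ {s}` avoids `M`, so it can
only meet `S'` inside the reverse shadow of `M`, which no such walk enters. -/
lemma exists_reflTransGen_delV_of_notMem_rShadow_sdiff_singleton (hsS' : s ∉ S')
    (hs : s ∉ rShadow G T (M \ {s})) (hS' : S' \ M ⊆ rShadow G T M) :
    ∃ t ∈ T, ReflTransGen (delV G S') s t := by
  obtain ⟨t, ht, hst⟩ : ∃ t ∈ T, ReflTransGen (delV G (M \ {s})) s t := by
    simpa [mem_rShadow_iff] using hs
  refine ⟨t, ht, ?_⟩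
  rcases reflTransGen_delV_of_sdiff_singleton hst with rfl | ⟨y, hyM, hsy, hyt⟩
  · exact .refl
  have hyS' : y ∉ S' := fun hy => (mem_rShadow_iff.1 (hS' ⟨hy, hyM⟩)).2 t ht hyt
  have hyt' : ReflTransGen (delV G S') y t := by
    by_contra hno
    obtain ⟨w, hw, hwt⟩ := exists_mem_sdiff_reflTransGen_delV hyt hno
    exact (mem_rShadow_iff.1 (hS' hw)).2 t ht hwt
  exact .head ⟨hsy, hsS', hyS'⟩ hyt'

lemma IsShadowMaximal.not_dominates [Finite V] (hM : IsShadowMaximal G Vinf T M)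
    (hx : x ∈ rShadow G T M) (hSM : S ⊆ M) (hS : IsSep G Vinf {x} T S)
    (hSmin : ∀ S'' ⊂ S, ¬ IsSep G Vinf {x} T S'') (hne : S' ≠ S) :
    ¬ Dominates G Vinf {x} T S' S := by
  rintro ⟨hS', hcard, hreach⟩
  have hsep' := (isSep_singleton_iff.1 hS').2
  have hxS' : x ∉ S' := fun hxS' => hreach.not_subset fun v hv => by
    rw [mem_reach_singleton_iff] at hv ⊢
    rw [eq_of_reflTransGen_delV hv hxS']
  have hreachS : ∀ s ∈ S \ S', ReflTransGen (delV G S') x s := fun s hs =>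
    reflTransGen_delV_of_reach_subset hS hSmin (fun h => hx.1 (hSM h)) hxS' hreach.subset hs
  have hexchange : S \ S' ⊆ rShadow G T (M \ S ∪ S') := fun s hs =>
    mem_rShadow_iff.2 ⟨fun h => h.elim (fun h => h.2 hs.1) hs.2, fun t ht hst =>
      hsep' t ht ((hreachS s hs).trans (reflTransGen_delV_mono subset_union_right hst))⟩
  have hcover : S' \ M ⊆ rShadow G T M := (sdiff_subset_sdiff_right hSM).trans
    (hM.sdiff_subset_rShadow_of_exchange hSM hS'.1.subset_compl_right hcard hexchange)
  obtain ⟨s, hs⟩ : (S \ S').Nonempty :=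
    sdiff_nonempty.2 fun h => hne (eq_of_subset_of_ncard_le h hcard).symm
  obtain ⟨t, ht, hst⟩ := exists_reflTransGen_delV_of_notMem_rShadow_sdiff_singleton hs.2
    (hM.oddMWC.notMem_rShadow_sdiff_singleton hM.ncard_le (hSM hs.1)) hcover
  exact hsep' t ht ((hreachS s hs).trans hst)

end ShadowMaximal

theorem shadow_maximal_solution_thin_important_general {V : Type*} [Fintype V]
    (G : V → V → Prop) (Vinf T : Set V)
    (M : Set V) (hM : OddMWC G Vinf T M)
    (hmin : ∀ S, OddMWC G Vinf T S → M.ncard ≤ S.ncard)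
    (hmax1 : ∀ S, OddMWC G Vinf T S → S.ncard = M.ncard →
      (rShadow G T S ∪ fShadow G T S ∪ S).ncard ≤
        (rShadow G T M ∪ fShadow G T M ∪ M).ncard)
    (hmax2 : ∀ S, OddMWC G Vinf T S → S.ncard = M.ncard →
      (rShadow G T S ∪ fShadow G T S ∪ S).ncard =
        (rShadow G T M ∪ fShadow G T M ∪ M).ncard →
      (rShadow G T S).ncard ≤ (rShadow G T M).ncard) :
    (∀ x ∈ M, x ∉ rShadow G T (M \ {x})) ∧
    (∀ x ∈ rShadow G T M, ∃ S, S ⊆ M ∧ ImportantSep G Vinf {x} T S) := by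
  have hmax : IsShadowMaximal G Vinf T M := ⟨hM, hmin, hmax1, hmax2⟩
  refine ⟨fun x hx => hM.notMem_rShadow_sdiff_singleton hmin hx, fun x hx => ?_⟩
  have hMsep : IsSep G Vinf {x} T M :=
    isSep_singleton_iff.2 ⟨subset_compl_iff_disjoint_right.1 hM.1, (mem_rShadow_iff.1 hx).2⟩
  obtain ⟨S, hSM, hS⟩ := (toFinite {S | IsSep G Vinf {x} T S}).exists_le_minimal hMsep
  have hSmin : ∀ S' ⊂ S, ¬ IsSep G Vinf {x} T S' := fun _ h => hS.not_prop_of_lt h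
  exact ⟨S, hSM, hS.prop, hSmin, fun S' _ hne => hmax.not_dominates hx hSM hS.prop hSmin hne⟩

/-- **Corollary (shadow-maximal optimal solutions are thin and covered by
important separators).**
Let `(G, Vinf, T, k)` be an instance of OddMultiwayNodeCut with `G` a DAG and
`T ⊆ Vinf`.  Let `M` be a minimum-size odd multiway cut that, among all
minimum-size odd multiway cuts `S`, maximizes `|r_G(S) ∪ f_G(S) ∪ S|`, and
among those maximizes `|r_G(S)|`.  Then `M` is thin, and for every
`v ∈ r_G(M)` some important `v → T` separator is contained in `M`. -/
theorem shadow_maximal_solution_thin_important {V : Type*} [Fintype V]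
    (G : V → V → Prop) (hG : Acyclic G) (Vinf T : Set V) (hT : T ⊆ Vinf) (k : ℕ)
    (M : Set V) (hM : OddMWC G Vinf T M)
    (hmin : ∀ S, OddMWC G Vinf T S → M.ncard ≤ S.ncard)
    (hmax1 : ∀ S, OddMWC G Vinf T S → S.ncard = M.ncard →
      (rShadow G T S ∪ fShadow G T S ∪ S).ncard ≤
        (rShadow G T M ∪ fShadow G T M ∪ M).ncard)
    (hmax2 : ∀ S, OddMWC G Vinf T S → S.ncard = M.ncard →
      (rShadow G T S ∪ fShadow G T S ∪ S).ncard =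
        (rShadow G T M ∪ fShadow G T M ∪ M).ncard →
      (rShadow G T S).ncard ≤ (rShadow G T M).ncard) :
    (∀ x ∈ M, x ∉ rShadow G T (M \ {x})) ∧
    (∀ x ∈ rShadow G T M, ∃ S, S ⊆ M ∧ ImportantSep G Vinf {x} T S) :=
  shadow_maximal_solution_thin_important_general G Vinf T M hM hmin hmax1 hmax2
end

section
/- There exists a directed acyclic graph D = (V, E) with two distinguished nodes s and t such that the odd path cover polyhedron P^{odd-cover-dir} := {x ∈ ℝ^E : x ≥ 0 and Σ_{e ∈ P} x_e ≥ 1 for every odd-length s→t path P in D} has an extreme point that is not half-integral, i.e., an extreme point x for which some coordinate x_e is not an integer multiple of 1/2. -/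
/-- The odd path cover polyhedron `P^{odd-cover-dir}` of a DAG `D` with
distinguished vertices `s, t`, realized inside the space of all functions
`E → ℝ` on ordered pairs: coordinates on non-edges are set to `0`, all
coordinates are nonnegative, and every odd-length `s → t` path has total
weight at least `1`. -/
def oddCoverPoly {V : Type*} (D : V → V → Prop) (s t : V) :
    Set ((V × V) → ℝ) :=
  {x | (∀ e, 0 ≤ x e) ∧ (∀ e : V × V, ¬ D e.1 e.2 → x e = 0) ∧
    ∀ p, IsPathFrom D s t p → Odd (pathLen p) →
      1 ≤ ((edgesOf p).map x).sum}


@[simp]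
theorem edgesOf_singleton {V : Type*} (a : V) : edgesOf [a] = [] := rfl

@[simp]
theorem edgesOf_cons_cons {V : Type*} (a b : V) (p : List V) :
    edgesOf (a :: b :: p) = (a, b) :: edgesOf (b :: p) := rfl

theorem pathLen_cons {V : Type*} (a : V) {p : List V} (hp : p ≠ []) :
    pathLen (a :: p) = pathLen p + 1 := by
  cases p <;> simp_all [pathLen]

instance {V : Type*} [DecidableEq V] (G : V → V → Prop) [DecidableRel G] (u v : V) (p : List V) :
    Decidable (IsPathFrom G u v p) :=
  inferInstanceAs (Decidable ((p ≠ [] ∧ p.IsChain G ∧ p.Nodup) ∧ _ ∧ _))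

theorem acyclic_of_rank {V α : Type*} [Preorder α] {G : V → V → Prop} (f : V → α)
    (hf : ∀ a b, G a b → f a < f b) : Acyclic G := fun v hv => by
  have := Relation.TransGen.lift f hf v v hv
  rw [Function.onFun, Relation.transGen_eq_self] at this
  exact lt_irrefl _ this

theorem potential_le_sum_edgesOf {V M : Type*} [AddCommMonoid M] [PartialOrder M]
    [IsOrderedAddMonoid M] {G : V → V → Prop} {t : V} (w : V × V → M) (φ : V → ZMod 2 → M)
    (ht : φ t 0 ≤ 0) (hG : ∀ u v, G u v → ∀ i, φ u (i + 1) ≤ φ v i + w (u, v)) :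
    ∀ {p : List V} {v : V}, p.IsChain G → p.head? = some v → p.getLast? = some t →
      φ v (pathLen p) ≤ ((edgesOf p).map w).sum
  | [], _, _, hv, _ => by simp at hv
  | [a], v, _, hv, hlast => by
    obtain rfl : a = v := by simpa using hv
    obtain rfl : a = t := by simpa using hlast
    simpa [pathLen] using ht
  | a :: b :: p, v, hc, hv, hlast => by
    obtain rfl : a = v := by simpa using hv
    rw [List.isChain_cons_cons] at hc
    have ih := potential_le_sum_edgesOf w φ ht hG hc.2 rfl (by simpa using hlast)
    rw [pathLen_cons _ (List.cons_ne_nil _ _), edgesOf_cons_cons, List.map_cons, List.sum_cons,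
      Nat.cast_succ, add_comm (w _)]
    exact (hG a b hc.1 _).trans (add_le_add_left ih _)

theorem List.sum_map_midpoint {α K : Type*} [Field K] (l : List α) {x y z : α → K}
    (h : ∀ e, x e = (y e + z e) / 2) :
    (l.map x).sum = ((l.map y).sum + (l.map z).sum) / 2 := by
  induction l with
  | nil => simp
  | cons e l ih => simp only [List.map_cons, List.sum_cons, ih, h]; ring

theorem oddCoverPoly_extreme_of_tight_unique {V : Type*} {D : V → V → Prop} {s t : V}
    {x : V × V → ℝ}
    (huniq : ∀ y ∈ oddCoverPoly D s t, (∀ e, x e = 0 → y e = 0) →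
      (∀ p, IsPathFrom D s t p → Odd (pathLen p) →
        ((edgesOf p).map x).sum = 1 → ((edgesOf p).map y).sum = 1) → y = x) :
    ∀ y ∈ oddCoverPoly D s t, ∀ z ∈ oddCoverPoly D s t,
      (∀ e, x e = (y e + z e) / 2) → y = x ∧ z = x := by
  suffices key : ∀ y ∈ oddCoverPoly D s t, ∀ z ∈ oddCoverPoly D s t,
      (∀ e, x e = (y e + z e) / 2) → y = x from
    fun y hy z hz hxyz => ⟨key y hy z hz hxyz, key z hz y hy fun e => by rw [hxyz, add_comm]⟩
  intro y hy z hz hxyz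
  refine huniq y hy (fun e he => ?_) fun p hp hodd htight => ?_
  · linarith [hy.1 e, hz.1 e, hxyz e]
  · rw [List.sum_map_midpoint _ hxyz] at htight
    linarith [hy.2.2 p hp hodd, hz.2.2 p hp hodd]

def exampleDAG (a b : Fin 12) : Prop :=
  (a, b) ∈ ([(0, 2), (2, 3), (3, 5), (5, 6), (6, 8), (8, 9), (9, 10), (10, 11),
    (0, 1), (1, 5), (3, 4), (4, 8), (6, 7), (7, 10), (9, 11)] : List (Fin 12 × Fin 12))

instance : DecidableRel exampleDAG := fun _ _ => inferInstanceAs (Decidable (_ ∈ _))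

def heavyEdges : List (Fin 12 × Fin 12) := [(2, 3), (5, 6), (8, 9), (10, 11)]

def heavy (e : Fin 12 × Fin 12) : ℕ := if e ∈ heavyEdges then 1 else 0

noncomputable def thirdPoint (e : Fin 12 × Fin 12) : ℝ := heavy e / 3

/-- `oddPotential v i` is the least number of heavy edges on a `v → 11` path of length `≡ i`
(mod 2), or `4` if there is no such path. -/
def oddPotential : Fin 12 → ZMod 2 → ℕ :=
  ![![2, 3], ![3, 2], ![3, 2], ![1, 2], ![2, 1], ![2, 3], ![2, 1], ![1, 4], ![1, 2], ![1, 0],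
    ![4, 1], ![0, 4]]

theorem exampleDAG_lt : ∀ a b, exampleDAG a b → a < b := by decide +kernel

theorem oddPotential_le : ∀ u v, exampleDAG u v → ∀ i,
    oddPotential u (i + 1) ≤ oddPotential v i + heavy (u, v) := by decide +kernel

theorem exampleDAG_of_mem_heavyEdges : ∀ e ∈ heavyEdges, exampleDAG e.1 e.2 := by decide +kernel

theorem thirdPoint_mem : thirdPoint ∈ oddCoverPoly exampleDAG 0 11 := by
  refine ⟨fun e => by unfold thirdPoint; positivity, fun e he => ?_, fun p hp hodd => ?_⟩
  · have : e ∉ heavyEdges := mt (exampleDAG_of_mem_heavyEdges e) he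
    simp [thirdPoint, heavy, this]
  · have hG : ∀ u v, exampleDAG u v → ∀ i, (oddPotential u (i + 1) : ℝ) / 3 ≤
        (oddPotential v i : ℝ) / 3 + thirdPoint (u, v) := fun u v huv i => by
      rw [thirdPoint, ← add_div]
      gcongr
      exact_mod_cast oddPotential_le u v huv i
    have := potential_le_sum_edgesOf thirdPoint (fun v i => (oddPotential v i : ℝ) / 3)
      (by rw [show oddPotential 11 0 = 0 from rfl]; simp) hG hp.1.2.1 hp.2.1 hp.2.2
    rw [ZMod.natCast_eq_one_iff_odd.mpr hodd, show oddPotential 0 1 = 3 from rfl] at this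
    simpa using this

def tightPaths : List (List (Fin 12)) :=
  [[0, 1, 5, 6, 8, 9, 10, 11], [0, 2, 3, 4, 8, 9, 10, 11], [0, 2, 3, 5, 6, 7, 10, 11],
    [0, 2, 3, 5, 6, 8, 9, 11]]

theorem isPathFrom_of_mem_tightPaths :
    ∀ p ∈ tightPaths, IsPathFrom exampleDAG 0 11 p ∧ Odd (pathLen p) := by
  decide +kernel

theorem sum_thirdPoint_of_mem_tightPaths :
    ∀ p ∈ tightPaths, ((edgesOf p).map thirdPoint).sum = 1 := by
  simp only [tightPaths, List.forall_mem_cons, List.not_mem_nil, IsEmpty.forall_iff,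
    implies_true, and_true]
  norm_num [thirdPoint, heavy, heavyEdges]

theorem eq_thirdPoint_of_tight (y : Fin 12 × Fin 12 → ℝ) (hsupp : ∀ e, thirdPoint e = 0 → y e = 0)
    (htight : ∀ p, IsPathFrom exampleDAG 0 11 p → Odd (pathLen p) →
        ((edgesOf p).map thirdPoint).sum = 1 → ((edgesOf p).map y).sum = 1) :
    y = thirdPoint := by
  have hy0 : ∀ e ∉ heavyEdges, y e = 0 := fun e he => hsupp e (by simp [thirdPoint, heavy, he])
  have tight : ∀ p ∈ tightPaths, ((edgesOf p).map y).sum = 1 := fun p hp =>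
    htight p (isPathFrom_of_mem_tightPaths p hp).1 (isPathFrom_of_mem_tightPaths p hp).2
      (sum_thirdPoint_of_mem_tightPaths p hp)
  simp (disch := decide) only [tightPaths, List.forall_mem_cons, List.not_mem_nil,
    IsEmpty.forall_iff, implies_true, and_true, edgesOf_cons_cons, edgesOf_singleton,
    List.map_cons, List.map_nil, List.sum_cons, List.sum_nil, hy0, add_zero, zero_add] at tight
  obtain ⟨h1, h2, h3, h4⟩ := tight
  funext e
  by_cases he : e ∈ heavyEdges
  · simp only [heavyEdges, List.mem_cons, List.not_mem_nil, or_false] at he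
    rcases he with rfl | rfl | rfl | rfl <;> norm_num [thirdPoint, heavy, heavyEdges] <;> linarith
  · simp [hy0 e he, thirdPoint, heavy, he]

/-- **(Theorem: the odd path cover polyhedron of a DAG need not be
half-integral.)**  There is a DAG `D` with vertices `s, t` such that
`P^{odd-cover-dir}` has an extreme point `x` (i.e. `x = (y + z)/2` with
`y, z ∈ P` forces `y = z = x`) some coordinate of which (on an actual edge of
`D`) is not an integer multiple of `1/2`. -/
theorem oddCoverPoly_not_half_integral :
    ∃ (n : ℕ) (D : Fin n → Fin n → Prop) (s t : Fin n), Acyclic D ∧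
      ∃ x ∈ oddCoverPoly D s t,
        (∀ y ∈ oddCoverPoly D s t, ∀ z ∈ oddCoverPoly D s t,
          (∀ e, x e = (y e + z e) / 2) → y = x ∧ z = x) ∧
        ∃ e : Fin n × Fin n, D e.1 e.2 ∧ ∀ m : ℤ, x e ≠ (m : ℝ) / 2 := by
  refine ⟨12, exampleDAG, 0, 11, acyclic_of_rank id exampleDAG_lt, thirdPoint, thirdPoint_mem,
    oddCoverPoly_extreme_of_tight_unique fun y _ => eq_thirdPoint_of_tight y, (2, 3), by decide,
    fun m hm => ?_⟩
  have hthird : thirdPoint (2, 3) = 1 / 3 := by norm_num [thirdPoint, heavy, heavyEdges]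
  have : (3 * m : ℤ) = 2 := by exact_mod_cast (by linarith : (3 * m : ℝ) = 2)
  omega
end
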